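/- The function f(Ψ, Φ) = log(1 + Ψ²/Φ) on the domain Ψ ≥ 0, Φ > 0 satisfies, for any reference point (Ψ⁰, Φ⁰) with Ψ⁰ ≥ 0, Φ⁰ > 0, the lower bound f(Ψ, Φ) ≥ log(1 + (Ψ⁰)²/Φ⁰) − (Ψ⁰)²/Φ⁰ + 2Ψ⁰Ψ/Φ⁰ − (Ψ⁰)²(Ψ² + Φ) / (Φ⁰((Ψ⁰)² + Φ⁰)). -/

import Mathlib

/-!
Write `S = Ψ² + Φ`, so that `1 + Ψ²/Φ = S/Φ`. The tangent-line bound `log a ≥ log b + 1 - b/a`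
of the convex function `u ↦ -log u` at `u = 1/b`, taken at `b = 1 + Ψ⁰²/Φ⁰`, reduces the claim
to a lower bound for `Ψ²/S`. This quadratic-over-linear function is jointly convex, and its
tangent plane at `(Ψ⁰, S⁰)` gives exactly the remaining terms of the bound.
-/

open Real

lemma Real.log_add_one_sub_div_le_log {a b : ℝ} (ha : 0 < a) (hb : 0 < b) :
    log b + 1 - b / a ≤ log a := by
  have h := one_sub_inv_le_log_of_pos (div_pos ha hb)
  rw [inv_div, log_div ha.ne' hb.ne'] at h
  linarith

lemma two_mul_mul_sub_sq_mul_le_sq_div {K : Type*} [Field K] [LinearOrder K]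
    [IsStrictOrderedRing K] {s : K} (hs : 0 < s) (a x : K) :
    2 * a * x - a ^ 2 * s ≤ x ^ 2 / s := by
  have hgap : x ^ 2 / s - (2 * a * x - a ^ 2 * s) = (x - a * s) ^ 2 / s := by
    field_simp
    ring
  have : 0 ≤ (x - a * s) ^ 2 / s := by positivity
  linarith

theorem SE_concave_lower_bound_general (Ψ Φ Ψ0 Φ0 : ℝ)
    (hΦ : 0 < Φ) (hΦ0 : 0 < Φ0) :
    Real.log (1 + Ψ ^ 2 / Φ) ≥
      Real.log (1 + Ψ0 ^ 2 / Φ0) - Ψ0 ^ 2 / Φ0 + 2 * Ψ0 * Ψ / Φ0 -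
        Ψ0 ^ 2 * (Ψ ^ 2 + Φ) / (Φ0 * (Ψ0 ^ 2 + Φ0)) := by
  have hS : 0 < Ψ ^ 2 + Φ := by positivity
  have hS0 : 0 < Ψ0 ^ 2 + Φ0 := by positivity
  have hratio : (1 + Ψ0 ^ 2 / Φ0) / (1 + Ψ ^ 2 / Φ) =
      (Ψ0 ^ 2 + Φ0) / Φ0 * (1 - Ψ ^ 2 / (Ψ ^ 2 + Φ)) := by
    field_simp
    ring
  have htangent := two_mul_mul_sub_sq_mul_le_sq_div hS (Ψ0 / (Ψ0 ^ 2 + Φ0)) Ψ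
  calc Real.log (1 + Ψ0 ^ 2 / Φ0) - Ψ0 ^ 2 / Φ0 + 2 * Ψ0 * Ψ / Φ0 -
        Ψ0 ^ 2 * (Ψ ^ 2 + Φ) / (Φ0 * (Ψ0 ^ 2 + Φ0))
      = Real.log (1 + Ψ0 ^ 2 / Φ0) - Ψ0 ^ 2 / Φ0 + (Ψ0 ^ 2 + Φ0) / Φ0 *
          (2 * (Ψ0 / (Ψ0 ^ 2 + Φ0)) * Ψ - (Ψ0 / (Ψ0 ^ 2 + Φ0)) ^ 2 * (Ψ ^ 2 + Φ)) := by
        field_simp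
        ring
    _ ≤ Real.log (1 + Ψ0 ^ 2 / Φ0) - Ψ0 ^ 2 / Φ0 +
          (Ψ0 ^ 2 + Φ0) / Φ0 * (Ψ ^ 2 / (Ψ ^ 2 + Φ)) := by gcongr
    _ = Real.log (1 + Ψ0 ^ 2 / Φ0) + 1 - (1 + Ψ0 ^ 2 / Φ0) / (1 + Ψ ^ 2 / Φ) := by
        rw [hratio]
        field_simp
        ring
    _ ≤ Real.log (1 + Ψ ^ 2 / Φ) := Real.log_add_one_sub_div_le_log (by positivity) (by positivity)

theorem SE_concave_lower_bound (Ψ Φ Ψ0 Φ0 : ℝ)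
    (hΨ : 0 ≤ Ψ) (hΦ : 0 < Φ) (hΨ0 : 0 ≤ Ψ0) (hΦ0 : 0 < Φ0) :
    Real.log (1 + Ψ ^ 2 / Φ) ≥
      Real.log (1 + Ψ0 ^ 2 / Φ0) - Ψ0 ^ 2 / Φ0 + 2 * Ψ0 * Ψ / Φ0 -
        Ψ0 ^ 2 * (Ψ ^ 2 + Φ) / (Φ0 * (Ψ0 ^ 2 + Φ0)) :=
  SE_concave_lower_bound_general Ψ Φ Ψ0 Φ0 hΦ hΦ0
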